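/- arXiv:2104.03369 — 7 statements merged into one kernel-verified Lean document; each statement's English description precedes it below -/
import Mathlib

section
/- Suppose (F_k), (F̃_k) are sequences in [0,1], nondecreasing in k, with F_k ≤ F̃_k for all k, and with F_k − F_{k−1} ≤ p* and F̃_k − F̃_{k−1} ≤ p* for all k, where p* = (1/(q(m+1)))^(1/m). Define F'_k = F_k − q(F_k − F_{k−1})^(m+1) and similarly F̃'_k. Then F'_k ≤ F̃'_k for all k. -/
lemma pow_sub_pow_le_aux {x y : ℝ} (hy : 0 ≤ y) (hxy : y ≤ x) (n : ℕ) :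
    x ^ n - y ^ n ≤ n * x ^ (n - 1) * (x - y) := by
  have hx : 0 ≤ x := hy.trans hxy
  rw [← geom_sum₂_mul x y n]
  apply mul_le_mul_of_nonneg_right _ (by linarith)
  calc (∑ i ∈ Finset.range n, x ^ i * y ^ (n - 1 - i))
      ≤ ∑ i ∈ Finset.range n, x ^ (n - 1) := by
        apply Finset.sum_le_sum
        intro i hi
        have hi' : i ≤ n - 1 := Nat.le_sub_one_of_lt (Finset.mem_range.mp hi)
        calc x ^ i * y ^ (n - 1 - i) ≤ x ^ i * x ^ (n - 1 - i) := by
              apply mul_le_mul_of_nonneg_left (pow_le_pow_left₀ hy hxy _) (pow_nonneg hx _)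
          _ = x ^ (n - 1) := by rw [← pow_add]; congr 1; omega
    _ = n * x ^ (n - 1) := by rw [Finset.sum_const, Finset.card_range, nsmul_eq_mul]

theorem stmt8 (q : ℝ) (hq0 : 0 < q) (hq1 : q < 1) (m : ℕ) (hm : 1 ≤ m)
    (pstar : ℝ) (hpstar : pstar = (1 / (q * ((m : ℝ) + 1))) ^ ((1 : ℝ) / m))
    (F Ft : ℤ → ℝ)
    (hF01 : ∀ k, 0 ≤ F k ∧ F k ≤ 1) (hFt01 : ∀ k, 0 ≤ Ft k ∧ Ft k ≤ 1)
    (hFmono : Monotone F) (hFtmono : Monotone Ft)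
    (hle : ∀ k, F k ≤ Ft k)
    (hFstep : ∀ k, F k - F (k - 1) ≤ pstar)
    (hFtstep : ∀ k, Ft k - Ft (k - 1) ≤ pstar) :
    ∀ k : ℤ, F k - q * (F k - F (k - 1)) ^ (m + 1) ≤ Ft k - q * (Ft k - Ft (k - 1)) ^ (m + 1) := by
  intro k
  set d := F k - F (k - 1) with hd
  set d' := Ft k - Ft (k - 1) with hd'
  have hdn : 0 ≤ d := sub_nonneg.mpr (hFmono (by omega))
  have hdn' : 0 ≤ d' := sub_nonneg.mpr (hFtmono (by omega))
  have hds : d ≤ pstar := hFstep k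
  have hds' : d' ≤ pstar := hFtstep k
  -- key : pstar ^ m = 1 / (q * (m+1))
  have hbase : (0:ℝ) < 1 / (q * ((m:ℝ) + 1)) := by positivity
  have hpm : pstar ^ m = 1 / (q * ((m:ℝ) + 1)) := by
    rw [hpstar, ← Real.rpow_natCast _ m, ← Real.rpow_mul hbase.le,
      one_div_mul_cancel (by exact_mod_cast Nat.pos_of_ne_zero (by omega) |>.ne'), Real.rpow_one]
  rcases le_total d' d with h | h
  · -- d' ≤ d : d'^(m+1) ≤ d^(m+1)
    have : d' ^ (m+1) ≤ d ^ (m+1) := pow_le_pow_left₀ hdn' h _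
    have hFk : F k ≤ Ft k := hle k
    nlinarith [hq0.le]
  · -- d ≤ d'
    have key : d' ^ (m+1) - d ^ (m+1) ≤ (m+1) * d' ^ m * (d' - d) := by
      simpa using pow_sub_pow_le_aux hdn h (m+1)
    have hdm : d' ^ m ≤ pstar ^ m := pow_le_pow_left₀ hdn' hds' m
    have h1 : q * ((m:ℝ)+1) * d' ^ m ≤ 1 := by
      rw [hpm] at hdm
      calc q * ((m:ℝ)+1) * d' ^ m ≤ q * ((m:ℝ)+1) * (1 / (q * ((m:ℝ)+1))) := by
            apply mul_le_mul_of_nonneg_left hdm (by positivity)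
        _ = 1 := by field_simp
    have h2 : q * (d' ^ (m+1) - d ^ (m+1)) ≤ d' - d := by
      calc q * (d' ^ (m+1) - d ^ (m+1)) ≤ q * ((m+1) * d' ^ m * (d' - d)) :=
            mul_le_mul_of_nonneg_left key hq0.le
        _ = (q * ((m:ℝ)+1) * d' ^ m) * (d' - d) := by push_cast; ring
        _ ≤ 1 * (d' - d) := mul_le_mul_of_nonneg_right h1 (by linarith)
        _ = d' - d := one_mul _
    have hFk1 : F (k-1) ≤ Ft (k-1) := hle (k-1)
    have hdd : d' - d ≤ Ft k - F k := by simp only [hd, hd']; linarith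
    linarith
end

section
/- Let (p_k)_{k∈ℤ} be a probability mass function on ℤ (nonnegative, summing to 1), and define p'_k = p_k − q((p_k)^(m+1) − (p_{k−1})^(m+1)) with q ∈ (0,1), integer m ≥ 1. Then for all j, p'_j ≤ max(p_{j−1}, p_j), with equality if and only if p_{j−1} = p_j. -/
theorem stmt9 (q : ℝ) (hq0 : 0 < q) (hq1 : q < 1) (m : ℕ) (hm : 1 ≤ m)
    (p : ℤ → ℝ) (hp0 : ∀ k, 0 ≤ p k) (hpsum : HasSum p 1)
    (p' : ℤ → ℝ) (hp' : ∀ k, p' k = p k - q * ((p k) ^ (m + 1) - (p (k - 1)) ^ (m + 1))) :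
    ∀ j : ℤ, p' j ≤ max (p (j - 1)) (p j) ∧
      (p' j = max (p (j - 1)) (p j) ↔ p (j - 1) = p j) := by
  intro j
  set a := p (j - 1) with ha
  set b := p j with hb
  have ha0 : 0 ≤ a := hp0 _
  have hb0 : 0 ≤ b := hp0 _
  have hab1 : a + b ≤ 1 := by
    have h := sum_le_hasSum ({j - 1, j} : Finset ℤ) (fun i _ => hp0 i) hpsum
    rwa [Finset.sum_pair (by omega : j - 1 ≠ j)] at h
  have hpj : p' j = b - q * (b ^ (m + 1) - a ^ (m + 1)) := hp' j
  rcases lt_trichotomy a b with h | h | h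
  · have hmax : max a b = b := max_eq_right h.le
    have hpow : a ^ (m + 1) < b ^ (m + 1) := pow_lt_pow_left₀ h ha0 (by omega)
    have hlt : p' j < b := by rw [hpj]; nlinarith
    refine ⟨hlt.le.trans (le_max_right a b), ?_, fun he => absurd he h.ne⟩
    intro he; rw [hmax] at he; exact absurd he hlt.ne
  · have heq : b - q * (b ^ (m + 1) - b ^ (m + 1)) = b := by ring
    rw [hpj, h, max_self, heq]
    exact ⟨le_refl _, ⟨fun _ => rfl, fun _ => rfl⟩⟩
  · -- a > b
    have hmax : max a b = a := max_eq_left h.le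
    have hS : a ^ (m + 1) - b ^ (m + 1)
        = (∑ i ∈ Finset.range (m + 1), a ^ i * b ^ (m - i)) * (a - b) := by
      rw [← geom_sum₂_mul a b (m + 1)]
      norm_num
    set S := ∑ i ∈ Finset.range (m + 1), a ^ i * b ^ (m - i) with hSdef
    have hS0 : 0 ≤ S := Finset.sum_nonneg fun i _ =>
      mul_nonneg (pow_nonneg ha0 _) (pow_nonneg hb0 _)
    have hSb : S ≤ (a + b) ^ m := by
      rw [hSdef, add_pow]
      refine Finset.sum_le_sum fun i hi => ?_
      have hc : (1 : ℝ) ≤ (m.choose i : ℝ) := by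
        exact_mod_cast Nat.choose_pos (Finset.mem_range_succ_iff.mp hi)
      nlinarith [mul_nonneg (pow_nonneg ha0 i) (pow_nonneg hb0 (m - i))]
    have hpow1 : (a + b) ^ m ≤ 1 := pow_le_one₀ (by linarith) hab1
    have hkey : q * (a ^ (m + 1) - b ^ (m + 1)) < a - b := by
      rw [hS]
      have hqS : q * S < 1 := by nlinarith
      nlinarith
    have hlt : p' j < a := by rw [hpj]; nlinarith
    refine ⟨hlt.le.trans (le_max_left a b), ?_, fun he => absurd he h.ne'⟩
    intro he; rw [hmax] at he; exact absurd he hlt.ne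
end

section
/- Let (p_k)_{k∈ℤ} be a pmf on ℤ with at most one index ℓ such that p_ℓ > p*, where p* = (1/(q(m+1)))^(1/m) > 1/2. Define p'_k = p_k − q((p_k)^(m+1) − (p_{k−1})^(m+1)). Then there exists a constant C = C(m,q) > 0, independent of the pmf, such that if M := sup_k p_k > p*, then sup_k p'_k ≤ M − C. -/
/-- Geometric-type sum bound: if `x, y ≥ 0` and `x + y ≤ 1`, then
`∑_{i≤n} x^i y^(n-i) ≤ 1`. -/
lemma aux_sum_pow_le_one (x y : ℝ) (hx : 0 ≤ x) (hy : 0 ≤ y) (hxy : x + y ≤ 1) :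
    ∀ n : ℕ, (∑ i ∈ Finset.range (n + 1), x ^ i * y ^ (n - i)) ≤ 1 := by
  intro n
  induction n with
  | zero => simp
  | succ n ih =>
    have h1 : (∑ i ∈ Finset.range (n + 2), x ^ i * y ^ (n + 1 - i))
        = (∑ i ∈ Finset.range (n + 1), x ^ (i + 1) * y ^ (n + 1 - (i + 1)))
          + x ^ 0 * y ^ (n + 1 - 0) :=
      Finset.sum_range_succ' (fun i => x ^ i * y ^ (n + 1 - i)) (n + 1)
    have h2 : (∑ i ∈ Finset.range (n + 1), x ^ (i + 1) * y ^ (n + 1 - (i + 1)))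
        = x * ∑ i ∈ Finset.range (n + 1), x ^ i * y ^ (n - i) := by
      rw [Finset.mul_sum]
      refine Finset.sum_congr rfl fun i hi => ?_
      have : n + 1 - (i + 1) = n - i := by omega
      rw [this, pow_succ]; ring
    have hyn : y ^ (n + 1) ≤ y := pow_le_of_le_one hy (by linarith) (by omega)
    have hxs : x * (∑ i ∈ Finset.range (n + 1), x ^ i * y ^ (n - i)) ≤ x * 1 :=
      mul_le_mul_of_nonneg_left ih hx
    calc (∑ i ∈ Finset.range (n + 2), x ^ i * y ^ (n + 1 - i))
        = x * (∑ i ∈ Finset.range (n + 1), x ^ i * y ^ (n - i)) + y ^ (n + 1) := by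
          rw [h1, h2]; simp
      _ ≤ x * 1 + y := by linarith
      _ ≤ 1 := by linarith

/-- Monotonicity of `f(x) = x - q x^(m+1)` on `[0, p*]`. -/
lemma aux_f_mono (q : ℝ) (m : ℕ) (pstar x y : ℝ) (hq : 0 < q)
    (hkey : q * ((m : ℝ) + 1) * pstar ^ m = 1)
    (hy : 0 ≤ y) (hyx : y ≤ x) (hx : x ≤ pstar) :
    y - q * y ^ (m + 1) ≤ x - q * x ^ (m + 1) := by
  have hx0 : 0 ≤ x := hy.trans hyx
  have hps0 : 0 ≤ pstar := hx0.trans hx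
  have hid : x ^ (m + 1) - y ^ (m + 1)
      = (∑ i ∈ Finset.range (m + 1), x ^ i * y ^ (m - i)) * (x - y) := by
    rw [← geom_sum₂_mul x y (m + 1)]
    simp
  have hSle : (∑ i ∈ Finset.range (m + 1), x ^ i * y ^ (m - i))
      ≤ ((m : ℝ) + 1) * pstar ^ m := by
    have : ∀ i ∈ Finset.range (m + 1), x ^ i * y ^ (m - i) ≤ pstar ^ m := by
      intro i hi
      have hi' : i ≤ m := by simpa [Nat.lt_succ_iff] using hi
      have h1 : x ^ i * y ^ (m - i) ≤ pstar ^ i * pstar ^ (m - i) :=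
        mul_le_mul (pow_le_pow_left₀ hx0 hx i) (pow_le_pow_left₀ hy (hyx.trans hx) _)
          (pow_nonneg hy _) (pow_nonneg hps0 _)
      have h2 : pstar ^ i * pstar ^ (m - i) = pstar ^ m := by
        rw [← pow_add]; congr 1; omega
      linarith
    calc (∑ i ∈ Finset.range (m + 1), x ^ i * y ^ (m - i))
        ≤ ∑ _i ∈ Finset.range (m + 1), pstar ^ m := Finset.sum_le_sum this
      _ = ((m : ℝ) + 1) * pstar ^ m := by
          rw [Finset.sum_const, Finset.card_range]; push_cast; ring
  have hxy0 : 0 ≤ x - y := by linarith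
  have h3 : q * (x ^ (m + 1) - y ^ (m + 1)) ≤ x - y := by
    rw [hid]
    calc q * ((∑ i ∈ Finset.range (m + 1), x ^ i * y ^ (m - i)) * (x - y))
        ≤ q * ((((m : ℝ) + 1) * pstar ^ m) * (x - y)) := by
          apply mul_le_mul_of_nonneg_left _ hq.le
          exact mul_le_mul_of_nonneg_right hSle hxy0
      _ = (q * ((m : ℝ) + 1) * pstar ^ m) * (x - y) := by ring
      _ = x - y := by rw [hkey]; ring
  linarith

/-- Case `j - 1 = ℓ` key estimate: `f(M) - f(1-M) ≥ (2M-1)(1-q)`. -/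
lemma aux_caseC (q : ℝ) (m : ℕ) (M : ℝ) (hq : 0 ≤ q) (hq1 : q ≤ 1)
    (hM1 : M ≤ 1) (hMhalf : 1 / 2 ≤ M) :
    ((1 - M) - q * (1 - M) ^ (m + 1)) + q * M ^ (m + 1)
      ≤ (M - q * M ^ (m + 1)) + q * M ^ (m + 1) - (2 * M - 1) * (1 - q) := by
  have hb0 : (0 : ℝ) ≤ 1 - M := by linarith
  have hM0 : (0 : ℝ) ≤ M := by linarith
  have hid : M ^ (m + 1) - (1 - M) ^ (m + 1)
      = (∑ i ∈ Finset.range (m + 1), M ^ i * (1 - M) ^ (m - i)) * (M - (1 - M)) := by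
    rw [← geom_sum₂_mul M (1 - M) (m + 1)]
    simp
  have hS1 : (∑ i ∈ Finset.range (m + 1), M ^ i * (1 - M) ^ (m - i)) ≤ 1 :=
    aux_sum_pow_le_one M (1 - M) hM0 hb0 (by linarith) m
  set S := ∑ i ∈ Finset.range (m + 1), M ^ i * (1 - M) ^ (m - i) with hS
  -- goal reduces to (2M-1)(1-q) ≤ (2M-1)(1-qS)
  have h2 : (0 : ℝ) ≤ 2 * M - 1 := by linarith
  have h3 : q * S ≤ q := by
    calc q * S ≤ q * 1 := mul_le_mul_of_nonneg_left hS1 hq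
      _ = q := mul_one q
  have h4 : (2 * M - 1) * (q - q * S) ≥ 0 := mul_nonneg h2 (by linarith)
  nlinarith [hid]

theorem stmt10 (q : ℝ) (hq0 : 0 < q) (hq1 : q < 1) (m : ℕ) (hm : 1 ≤ m)
    (pstar : ℝ) (hpstar : pstar = (1 / (q * ((m : ℝ) + 1))) ^ ((1 : ℝ) / m))
    (hphalf : 1 / 2 < pstar) (hple : pstar ≤ 1) :
    ∃ C > 0, ∀ p : ℤ → ℝ, (∀ k, 0 ≤ p k) → HasSum p 1 →
      pstar < (⨆ k, p k) →
      ∀ j : ℤ, p j - q * ((p j) ^ (m + 1) - (p (j - 1)) ^ (m + 1)) ≤ (⨆ k, p k) - C := by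
  -- key algebraic identity for pstar
  have hm0 : (m : ℝ) ≠ 0 := by
    have : 0 < m := hm
    positivity
  have hbase : (0 : ℝ) < 1 / (q * ((m : ℝ) + 1)) := by positivity
  have hpow : pstar ^ m = 1 / (q * ((m : ℝ) + 1)) := by
    rw [hpstar, ← Real.rpow_natCast ((1 / (q * ((m : ℝ) + 1))) ^ ((1 : ℝ) / m)) m,
      ← Real.rpow_mul hbase.le, one_div_mul_cancel hm0, Real.rpow_one]
  have hkey : q * ((m : ℝ) + 1) * pstar ^ m = 1 := by
    rw [hpow]
    field_simp
  have hps0 : (0 : ℝ) < pstar := by linarith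
  -- the constant
  set C := min (q * (pstar ^ (m + 1) - (1 / 2 : ℝ) ^ (m + 1))) ((2 * pstar - 1) * (1 - q))
    with hC
  have hCpos : 0 < C := by
    apply lt_min
    · have : (1 / 2 : ℝ) ^ (m + 1) < pstar ^ (m + 1) :=
        pow_lt_pow_left₀ hphalf (by norm_num) (by omega)
      have := sub_pos.mpr this
      positivity
    · have h1 : (0 : ℝ) < 2 * pstar - 1 := by linarith
      have h2 : (0 : ℝ) < 1 - q := by linarith
      positivity
  refine ⟨C, hCpos, ?_⟩
  intro p hp hsum hMgt j
  -- boundedness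
  have hle1 : ∀ k, p k ≤ 1 := fun k => le_hasSum hsum k (fun i _ => hp i)
  have hbdd : BddAbove (Set.range p) := by
    refine ⟨1, ?_⟩
    rintro x ⟨k, rfl⟩
    exact hle1 k
  -- the big atom
  obtain ⟨ℓ, hℓ⟩ := exists_lt_of_lt_ciSup hMgt
  have hsmall : ∀ k, k ≠ ℓ → p k ≤ 1 - p ℓ := by
    intro k hk
    have h2 : p ℓ + p k ≤ 1 := by
      have := sum_le_hasSum ({ℓ, k} : Finset ℤ) (fun i _ => hp i) hsum
      rwa [Finset.sum_pair (Ne.symm hk)] at this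
    linarith
  have hlhalf : 1 / 2 < p ℓ := lt_trans hphalf hℓ
  have hMeq : (⨆ k, p k) = p ℓ := by
    apply le_antisymm
    · apply ciSup_le
      intro k
      by_cases hk : k = ℓ
      · rw [hk]
      · have := hsmall k hk
        linarith
    · exact le_ciSup hbdd ℓ
  rw [hMeq]
  have hl1 : p ℓ ≤ 1 := hle1 ℓ
  -- bound on small atoms vs pstar
  have hsmall' : ∀ k, k ≠ ℓ → p k ≤ 1 - pstar := by
    intro k hk
    have h1 := hsmall k hk
    linarith [hℓ]
  have h1ps : 1 - pstar ≤ pstar := by linarith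
  -- main case split
  by_cases hj : j = ℓ
  · -- j = ℓ : slack from q(M^{m+1} - p_{ℓ-1}^{m+1})
    subst hj
    have hne : j - 1 ≠ j := by omega
    have h1 : p (j - 1) ≤ 1 - pstar := hsmall' _ hne
    have h2 : p (j - 1) ^ (m + 1) ≤ (1 / 2 : ℝ) ^ (m + 1) :=
      pow_le_pow_left₀ (hp _) (by linarith) _
    have h3 : pstar ^ (m + 1) ≤ p j ^ (m + 1) :=
      pow_le_pow_left₀ hps0.le hℓ.le _
    have h4 : C ≤ q * (pstar ^ (m + 1) - (1 / 2 : ℝ) ^ (m + 1)) := min_le_left _ _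
    have h5 : q * (pstar ^ (m + 1) - (1 / 2 : ℝ) ^ (m + 1))
        ≤ q * (p j ^ (m + 1) - p (j - 1) ^ (m + 1)) := by
      apply mul_le_mul_of_nonneg_left _ hq0.le
      linarith
    linarith
  · by_cases hj1 : j - 1 = ℓ
    · -- j - 1 = ℓ
      have hfj : p j - q * p j ^ (m + 1)
          ≤ (1 - p ℓ) - q * (1 - p ℓ) ^ (m + 1) := by
        apply aux_f_mono q m pstar _ _ hq0 hkey (hp j) (hsmall j hj) (by linarith)
      have hcc := aux_caseC q m (p ℓ) hq0.le hq1.le hl1 hlhalf.le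
      have h6 : C ≤ (2 * pstar - 1) * (1 - q) := min_le_right _ _
      have h7 : (2 * pstar - 1) * (1 - q) ≤ (2 * p ℓ - 1) * (1 - q) := by
        apply mul_le_mul_of_nonneg_right _ (by linarith)
        linarith
      rw [hj1]
      nlinarith
    · -- both p j and p (j-1) are small atoms
      have h1 : p j ≤ 1 - p ℓ := hsmall j hj
      have h2 : p (j - 1) ≤ 1 - p ℓ := hsmall _ hj1
      have hfj : p j - q * p j ^ (m + 1)
          ≤ (1 - p ℓ) - q * (1 - p ℓ) ^ (m + 1) :=
        aux_f_mono q m pstar _ _ hq0 hkey (hp j) h1 (by linarith [hℓ])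
      have h3 : p (j - 1) ^ (m + 1) ≤ (1 - p ℓ) ^ (m + 1) :=
        pow_le_pow_left₀ (hp _) h2 _
      -- so p'_j ≤ 1 - p ℓ, and C ≤ 2 p ℓ - 1
      have h4 : C ≤ (2 * pstar - 1) * (1 - q) := min_le_right _ _
      have h5 : (2 * pstar - 1) * (1 - q) ≤ 2 * pstar - 1 := by
        nlinarith
      have h6 : q * ((1 - p ℓ) ^ (m + 1) - (1 - p ℓ) ^ (m + 1)) = 0 := by ring
      nlinarith [mul_le_mul_of_nonneg_left h3 hq0.le]
end

section
/- For q ∈ (0,1), integer m ≥ 1, and 0 ≤ a < b ≤ 1, the function u^{a,b}(x,t) defined on ℝ × (0,∞) by: a if x ≤ 0; a + (m/(q^(1/m)(m+1)^((m+1)/m)))·(x^(m+1)/t)^(1/m) if 0 ≤ (x^(m+1)/t)^(1/m) ≤ (b−a)·q^(1/m)·(m+1)^((m+1)/m)/m; and b otherwise, equals the Hopf-Lax infimum inf_{y∈ℝ} { a·1{y≤0} + b·1{y>0} + t·H*((x−y)/t) } where H*(p) = q^(−1/m)|p|^((m+1)/m)·m/(m+1)^((m+1)/m). -/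
/-!
With step initial data the Hopf–Lax infimum splits according to the sign of `y`. Among
`y > 0` the choice `y = x` (possible when `x > 0`) costs exactly `b`; among `y ≤ 0`, since the
cost `t H*((x - y)/t)` is nonnegative and increasing in `x - y ≥ 0`, the best choice is
`y = min x 0`. So the infimum is `a` for `x ≤ 0` and `min b (a + t H*(x/t))` for `x > 0`, and
`t H*(x/t)` is the explicit multiple of `(x^(m+1)/t)^(1/m)` in the formula.
-/

open Set

/-- The Legendre transform of `p ↦ q * |p| ^ (m + 1)`. -/
noncomputable def hamiltonianConj (q : ℝ) (m : ℕ) (p : ℝ) : ℝ :=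
  q ^ (-(1 : ℝ) / m) * |p| ^ (((m : ℝ) + 1) / m) * m / ((m : ℝ) + 1) ^ (((m : ℝ) + 1) / m)

section HamiltonianConj

variable {q : ℝ} {m : ℕ}

theorem hamiltonianConj_nonneg (hq : 0 ≤ q) (p : ℝ) : 0 ≤ hamiltonianConj q m p := by
  unfold hamiltonianConj
  have := Real.rpow_nonneg hq (-(1 : ℝ) / m)
  positivity

theorem hamiltonianConj_zero : hamiltonianConj q m 0 = 0 := by
  rcases Nat.eq_zero_or_pos m with rfl | hm
  · simp [hamiltonianConj]
  · have : ((m : ℝ) + 1) / m ≠ 0 := by positivity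
    simp [hamiltonianConj, Real.zero_rpow this]

theorem hamiltonianConj_monotoneOn (hq : 0 ≤ q) : MonotoneOn (hamiltonianConj q m) (Ici 0) := by
  intro p hp p' hp' hpp'
  have := Real.rpow_nonneg hq (-(1 : ℝ) / m)
  unfold hamiltonianConj
  rw [abs_of_nonneg hp, abs_of_nonneg hp']
  gcongr

theorem mul_div_rpow_succ_div (m : ℕ) (hm : m ≠ 0) {x t : ℝ} (hx : 0 ≤ x) (ht : 0 < t) :
    t * (x / t) ^ (((m : ℝ) + 1) / m) = (x ^ (m + 1) / t) ^ ((1 : ℝ) / m) := by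
  have hexp : ((m : ℝ) + 1) / m = 1 + 1 / m := by field_simp
  rw [Real.div_rpow (pow_nonneg hx _) ht.le, ← Real.rpow_natCast x (m + 1), ← Real.rpow_mul hx,
    Real.div_rpow hx ht.le, Nat.cast_succ, show ((m : ℝ) + 1) * (1 / m) = (m + 1) / m by ring,
    hexp, Real.rpow_add ht, Real.rpow_one]
  field_simp

theorem mul_hamiltonianConj_div (hq : 0 ≤ q) (hm : m ≠ 0) {x t : ℝ} (hx : 0 ≤ x) (ht : 0 < t) :
    t * hamiltonianConj q m (x / t) =
      (m : ℝ) / (q ^ ((1 : ℝ) / m) * ((m : ℝ) + 1) ^ (((m : ℝ) + 1) / m)) *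
        (x ^ (m + 1) / t) ^ ((1 : ℝ) / m) := by
  rw [← mul_div_rpow_succ_div m hm hx ht, hamiltonianConj, abs_of_nonneg (by positivity), neg_div,
    Real.rpow_neg hq]
  ring

end HamiltonianConj

section StepData

variable {a b : ℝ} {L : ℝ → ℝ} {x : ℝ}

theorem isLeast_range_step_add_of_nonpos (hab : a ≤ b) (hL : ∀ z, 0 ≤ L z) (hL0 : L 0 = 0)
    (hx : x ≤ 0) : IsLeast (range fun y => (if y ≤ 0 then a else b) + L (x - y)) a := by
  refine ⟨⟨x, by simp [hx, hL0]⟩, ?_⟩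
  rintro _ ⟨y, rfl⟩
  have := hL (x - y)
  dsimp only
  split_ifs <;> linarith

theorem isLeast_range_step_add_of_pos (hL : ∀ z, 0 ≤ L z) (hL0 : L 0 = 0)
    (hmono : MonotoneOn L (Ici 0)) (hx : 0 < x) :
    IsLeast (range fun y => (if y ≤ 0 then a else b) + L (x - y)) (min b (a + L x)) := by
  refine ⟨?_, ?_⟩
  · rcases min_choice b (a + L x) with h | h <;> rw [h]
    · exact ⟨x, by simp [not_le.mpr hx, hL0]⟩
    · exact ⟨0, by simp⟩
  · rintro _ ⟨y, rfl⟩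
    dsimp only
    split_ifs with hy
    · have := hmono hx.le (mem_Ici.mpr (by linarith)) (by linarith : x ≤ x - y)
      exact (min_le_right _ _).trans (by linarith)
    · exact (min_le_left _ _).trans (le_add_of_nonneg_right (hL _))

end StepData

theorem ite_le_mul_div_eq_min {a b k n P : ℝ} (hk : 0 < k) (hn : 0 < n) :
    (if P ≤ (b - a) * k / n then a + n / k * P else b) = min b (a + n / k * P) := by
  have : P ≤ (b - a) * k / n ↔ a + n / k * P ≤ b := by
    rw [le_div_iff₀ hn, ← le_sub_iff_add_le', div_mul_eq_mul_div, div_le_iff₀ hk, mul_comm n]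
  split_ifs with h
  · exact (min_eq_right (this.mp h)).symm
  · exact (min_eq_left (not_le.mp (mt this.mpr h)).le).symm

theorem stmt11_general (q : ℝ) (hq0 : 0 < q) (m : ℕ) (hm : 1 ≤ m)
    (a b : ℝ) (hab : a < b) (x t : ℝ) (ht : 0 < t) :
    IsGLB
      (Set.range fun y : ℝ =>
        (if y ≤ 0 then a else b) +
          t * (q ^ (-(1 : ℝ) / m) * |(x - y) / t| ^ (((m : ℝ) + 1) / m) * m /
            ((m : ℝ) + 1) ^ (((m : ℝ) + 1) / m)))
      (if x ≤ 0 then a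
        else if (x ^ (m + 1) / t) ^ ((1 : ℝ) / m) ≤
            (b - a) * q ^ ((1 : ℝ) / m) * ((m : ℝ) + 1) ^ (((m : ℝ) + 1) / m) / m then
          a + ((m : ℝ) / (q ^ ((1 : ℝ) / m) * ((m : ℝ) + 1) ^ (((m : ℝ) + 1) / m))) *
            (x ^ (m + 1) / t) ^ ((1 : ℝ) / m)
        else b) := by
  have hq : 0 ≤ q := hq0.le
  have hm0 : m ≠ 0 := Nat.one_le_iff_ne_zero.mp hm
  set L : ℝ → ℝ := fun z => t * hamiltonianConj q m (z / t)
  have hL : ∀ z, 0 ≤ L z := fun z => mul_nonneg ht.le (hamiltonianConj_nonneg hq _)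
  have hL0 : L 0 = 0 := by simp [L, hamiltonianConj_zero]
  rcases le_or_gt x 0 with hx | hx
  · rw [if_pos hx]
    exact (isLeast_range_step_add_of_nonpos hab.le hL hL0 hx).isGLB
  have hmono : MonotoneOn L (Ici 0) := fun z hz w hw hzw =>
    mul_le_mul_of_nonneg_left (hamiltonianConj_monotoneOn hq (div_nonneg hz ht.le)
      (div_nonneg hw ht.le) (div_le_div_of_nonneg_right hzw ht.le)) ht.le
  have hk : 0 < q ^ ((1 : ℝ) / m) * ((m : ℝ) + 1) ^ (((m : ℝ) + 1) / m) := by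
    have := Real.rpow_pos_of_pos hq0 ((1 : ℝ) / m)
    positivity
  rw [if_neg hx.not_ge, mul_assoc (b - a), ite_le_mul_div_eq_min hk (by positivity),
    ← mul_hamiltonianConj_div hq hm0 hx.le ht]
  exact (isLeast_range_step_add_of_pos hL hL0 hmono hx).isGLB

theorem stmt11 (q : ℝ) (hq0 : 0 < q) (hq1 : q < 1) (m : ℕ) (hm : 1 ≤ m)
    (a b : ℝ) (ha : 0 ≤ a) (hab : a < b) (hb : b ≤ 1) (x t : ℝ) (ht : 0 < t) :
    IsGLB
      (Set.range fun y : ℝ =>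
        (if y ≤ 0 then a else b) +
          t * (q ^ (-(1 : ℝ) / m) * |(x - y) / t| ^ (((m : ℝ) + 1) / m) * m /
            ((m : ℝ) + 1) ^ (((m : ℝ) + 1) / m)))
      (if x ≤ 0 then a
        else if (x ^ (m + 1) / t) ^ ((1 : ℝ) / m) ≤
            (b - a) * q ^ ((1 : ℝ) / m) * ((m : ℝ) + 1) ^ (((m : ℝ) + 1) / m) / m then
          a + ((m : ℝ) / (q ^ ((1 : ℝ) / m) * ((m : ℝ) + 1) ^ (((m : ℝ) + 1) / m))) *
            (x ^ (m + 1) / t) ^ ((1 : ℝ) / m)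
        else b) :=
  stmt11_general q hq0 m hm a b hab x t ht
end

section
/- Suppose (F_k)_{k∈ℤ} is nondecreasing with values in [0,1] and F_k − F_{k−1} ≤ p* for all k, where p* = (1/(q(m+1)))^(1/m), q ∈ (0,1), integer m ≥ 1. Define F'_k = F_k − q(F_k − F_{k−1})^(m+1). Then (F'_k) is nondecreasing in k, takes values in [0,1], and F'_k − F'_{k−1} ≤ p* for all k. -/
lemma aux_pow_sub (a b : ℝ) (ha : 0 ≤ a) (hab : a ≤ b) :
    ∀ n : ℕ, b ^ (n + 1) - a ^ (n + 1) ≤ ((n : ℝ) + 1) * b ^ n * (b - a) := by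
  intro n
  induction n with
  | zero => simp
  | succ n ih =>
    have hb : 0 ≤ b := ha.trans hab
    have hpow : a ^ (n + 1) ≤ b ^ (n + 1) := pow_le_pow_left₀ ha hab _
    have h1 : b ^ (n + 2) - a ^ (n + 2)
        = b * (b ^ (n + 1) - a ^ (n + 1)) + a ^ (n + 1) * (b - a) := by ring
    have h2 : b * (b ^ (n + 1) - a ^ (n + 1)) ≤ b * (((n : ℝ) + 1) * b ^ n * (b - a)) :=
      mul_le_mul_of_nonneg_left ih hb
    have h3 : a ^ (n + 1) * (b - a) ≤ b ^ (n + 1) * (b - a) :=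
      mul_le_mul_of_nonneg_right hpow (by linarith)
    have : b * (((n : ℝ) + 1) * b ^ n * (b - a)) = ((n : ℝ) + 1) * b ^ (n + 1) * (b - a) := by
      ring
    push_cast
    nlinarith [h1, h2, h3]

theorem stmt15 (q : ℝ) (hq0 : 0 < q) (hq1 : q < 1) (m : ℕ) (hm : 1 ≤ m)
    (pstar : ℝ) (hpstar : pstar = (1 / (q * ((m : ℝ) + 1))) ^ ((1 : ℝ) / m))
    (hple : pstar ≤ 1)
    (F : ℤ → ℝ) (hmono : Monotone F) (h01 : ∀ k, 0 ≤ F k ∧ F k ≤ 1)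
    (hstep : ∀ k, F k - F (k - 1) ≤ pstar)
    (F' : ℤ → ℝ) (hF' : ∀ k, F' k = F k - q * (F k - F (k - 1)) ^ (m + 1)) :
    Monotone F' ∧ (∀ k, 0 ≤ F' k ∧ F' k ≤ 1) ∧ (∀ k, F' k - F' (k - 1) ≤ pstar) := by
  have hm0 : (m : ℝ) ≠ 0 := by positivity
  have hbase : (0 : ℝ) < 1 / (q * ((m : ℝ) + 1)) := by positivity
  have hppos : 0 < pstar := by rw [hpstar]; positivity
  have hp_pow : pstar ^ m = 1 / (q * ((m : ℝ) + 1)) := by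
    rw [hpstar, ← Real.rpow_natCast ((1 / (q * ((m : ℝ) + 1))) ^ ((1 : ℝ) / m)) m,
      ← Real.rpow_mul hbase.le]
    rw [one_div_mul_cancel hm0, Real.rpow_one]
  have hkey : q * ((m : ℝ) + 1) * pstar ^ m = 1 := by
    rw [hp_pow]; field_simp
  have hd0 : ∀ k : ℤ, 0 ≤ F k - F (k - 1) := fun k => sub_nonneg.2 (hmono (by omega))
  -- q * d^(m+1) ≤ d for 0 ≤ d ≤ pstar
  have hqd : ∀ d : ℝ, 0 ≤ d → d ≤ pstar → q * d ^ (m + 1) ≤ d := by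
    intro d hd hdp
    have h1 : d ^ m ≤ pstar ^ m := pow_le_pow_left₀ hd hdp m
    have h2 : q * d ^ (m + 1) = (q * d ^ m) * d := by ring
    have h3 : q * d ^ m ≤ q * pstar ^ m := mul_le_mul_of_nonneg_left h1 hq0.le
    have h4 : q * pstar ^ m ≤ 1 := by
      nlinarith [hkey, pow_pos hppos m]
    calc q * d ^ (m + 1) = (q * d ^ m) * d := h2
      _ ≤ 1 * d := mul_le_mul_of_nonneg_right (h3.trans h4) hd
      _ = d := one_mul d
  -- h(x) = x - q x^(m+1) is monotone on [0,pstar]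
  have hmono_h : ∀ a b : ℝ, 0 ≤ a → a ≤ b → b ≤ pstar →
      a - q * a ^ (m + 1) ≤ b - q * b ^ (m + 1) := by
    intro a b ha hab hbp
    have := aux_pow_sub a b ha hab m
    have hbm : b ^ m ≤ pstar ^ m := pow_le_pow_left₀ (ha.trans hab) hbp m
    have h1 : q * (b ^ (m + 1) - a ^ (m + 1)) ≤ q * (((m : ℝ) + 1) * b ^ m * (b - a)) :=
      mul_le_mul_of_nonneg_left this hq0.le
    have h2 : q * (((m : ℝ) + 1) * b ^ m * (b - a)) ≤ q * (((m : ℝ) + 1) * pstar ^ m * (b - a)) := by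
      have : 0 ≤ b - a := by linarith
      nlinarith [mul_le_mul_of_nonneg_right hbm this]
    have h3 : q * (((m : ℝ) + 1) * pstar ^ m * (b - a)) = b - a := by
      nlinarith [hkey]
    linarith
  have key_mono : ∀ k : ℤ, F' (k - 1) ≤ F' k := by
    intro k
    rw [hF' k, hF' (k - 1)]
    have h1 := hqd _ (hd0 k) (hstep k)
    have h2 : 0 ≤ q * (F (k - 1) - F (k - 1 - 1)) ^ (m + 1) := by
      have := hd0 (k - 1)
      positivity
    have := hmono (show (k - 1 : ℤ) ≤ k by omega)
    linarith
  refine ⟨?_, ?_, ?_⟩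
  · have : ∀ n : ℤ, F' n ≤ F' (n + 1) := by
      intro n
      have := key_mono (n + 1)
      simpa using this
    exact monotone_int_of_le_succ this
  · intro k
    constructor
    · rw [hF' k]
      have h1 := hqd _ (hd0 k) (hstep k)
      have := (h01 (k - 1)).1
      linarith
    · rw [hF' k]
      have h2 : 0 ≤ q * (F k - F (k - 1)) ^ (m + 1) := by
        have := hd0 k; positivity
      have := (h01 k).2
      linarith
  · intro k
    rw [hF' k, hF' (k - 1)]
    have hA := hmono_h _ pstar (hd0 k) (hstep k) le_rfl
    have hB : q * (F (k - 1) - F (k - 1 - 1)) ^ (m + 1) ≤ q * pstar ^ (m + 1) := by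
      have := pow_le_pow_left₀ (hd0 (k - 1)) (hstep (k - 1)) (m + 1)
      nlinarith
    linarith
end

section
/- Consider the generalized scheme G(f_{k+ℓ},…,f_{k−s}) = f_k − Σ_{j=k−s}^{k−1} (f_{j+1}−f_j)^(m+1)·P(D ≥ k−j) + Σ_{j=k}^{k+ℓ−1} (f_{j+1}−f_j)^(m+1)·P(D < k−j) for an integer-valued step variable D with P(−ℓ ≤ D ≤ s) = 1. If P(D ≥ 2) > 0, then for any Λ > 0 there exist values with 0 ≤ f_{j+1} − f_j ≤ Λ for all j such that the partial derivative of G with respect to f_{k−1} is strictly negative; specifically, if f_k = f_{k−1} > f_{k−2} then ∂G/∂f_{k−1} = (m+1)(f_k−f_{k−1})^m P(D≥1) − (m+1)(f_{k−1}−f_{k−2})^m P(D≥2) < 0. -/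
/-!
Only the increments `f k - f (k-1)` and `f (k-1) - f (k-2)` involve `f (k-1)`, with weights
`P(D ≥ 1)` and `P(D ≥ 2)`; the latter increment occurs in `G` because `P(D ≥ 2) > 0` forces
`s ≥ 2`. Differentiating gives the stated formula. On a flat step `f k = f (k-1)` following a
strict rise, the first term vanishes (as `m ≥ 1`) and the second is strictly negative; a single
jump of height `Λ` from `k - 2` to `k - 1` realises this configuration.
-/

open Finset Function

theorem le_of_tsum_tail_pos (d : ℤ → ℝ) (n s : ℤ) (hsupp : ∀ j, d j ≠ 0 → j ≤ s)
    (htail : 0 < ∑' j : ℤ, if n ≤ j then d j else 0) : n ≤ s := by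
  by_contra! hsn
  have hzero : ∀ j : ℤ, (if n ≤ j then d j else 0) = 0 := fun j => by
    split_ifs with hj
    · exact not_not.1 fun hdj => by have := hsupp j hdj; omega
    · rfl
  simp only [hzero, tsum_zero, lt_self_iff_false] at htail

theorem Finset.sum_update_sub_of_forall_ne {α M : Type*} [Sub α] [AddCommMonoid M]
    (S : Finset ℤ) (g : ℤ → α → M) (f : ℤ → α) (i : ℤ) (t : α)
    (hS : ∀ j ∈ S, j ≠ i ∧ j + 1 ≠ i) :
    ∑ j ∈ S, g j (update f i t (j + 1) - update f i t j) = ∑ j ∈ S, g j (f (j + 1) - f j) :=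
  sum_congr rfl fun j hj => by
    rw [update_of_ne (hS j hj).2, update_of_ne (hS j hj).1]

theorem Finset.sum_Icc_update_sub_pred {α M : Type*} [Sub α] [AddCommMonoid M]
    (g : ℤ → α → M) (f : ℤ → α) (a k : ℤ) (t : α) (ha : a ≤ k - 2) :
    ∑ j ∈ Icc a (k - 1), g j (update f (k - 1) t (j + 1) - update f (k - 1) t j) =
      g (k - 1) (f k - t) + g (k - 2) (t - f (k - 2)) +
        ∑ j ∈ Icc a (k - 3), g j (f (j + 1) - f j) := by
  have hIcc : Icc a (k - 1) = insert (k - 1) (insert (k - 2) (Icc a (k - 3))) := by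
    ext j; simp only [mem_Icc, mem_insert]; omega
  rw [hIcc, sum_insert (by simp only [mem_insert, mem_Icc]; omega),
    sum_insert (by simp only [mem_Icc]; omega),
    sum_update_sub_of_forall_ne _ _ _ _ _ fun j hj => by rw [mem_Icc] at hj; omega,
    sub_add_cancel, show k - 2 + 1 = k - 1 by ring, update_self,
    update_of_ne (show k ≠ k - 1 by omega), update_of_ne (show k - 2 ≠ k - 1 by omega), add_assoc]

theorem hasDerivAt_sub_sub_pow_mul_sub_sub_pow_mul (C a b p q x : ℝ) (n : ℕ) :
    HasDerivAt (fun t => C - (a - t) ^ (n + 1) * p - (t - b) ^ (n + 1) * q)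
      ((n + 1) * (a - x) ^ n * p - (n + 1) * (x - b) ^ n * q) x := by
  have ha := ((hasDerivAt_id' (x := x)).const_sub a |>.fun_pow (n + 1)).mul_const p
  have hb := ((hasDerivAt_id' (x := x)).sub_const b |>.fun_pow (n + 1)).mul_const q
  refine (((hasDerivAt_const x C).sub ha).sub hb).congr_deriv ?_
  rw [Nat.add_sub_cancel]
  push_cast
  ring

theorem ite_le_add_one_sub_ite_le_mem_Icc {Λ : ℝ} (hΛ : 0 ≤ Λ) (i j : ℤ) :
    0 ≤ (if i ≤ j + 1 then Λ else 0) - (if i ≤ j then Λ else 0) ∧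
      (if i ≤ j + 1 then Λ else 0) - (if i ≤ j then Λ else 0) ≤ Λ := by
  by_cases hj : i ≤ j
  · simp [hj, show i ≤ j + 1 by omega, hΛ]
  · by_cases hj' : i ≤ j + 1 <;> simp [hj, hj', hΛ]

theorem stmt16_general (m : ℕ) (hm : 1 ≤ m) (s ℓ : ℕ)
    (d : ℤ → ℝ)
    (hsupp : ∀ j, d j ≠ 0 → -(ℓ : ℤ) ≤ j ∧ j ≤ (s : ℤ))
    (Pge : ℤ → ℝ) (hPge : ∀ n, Pge n = ∑' j : ℤ, if n ≤ j then d j else 0)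
    (Plt : ℤ → ℝ)
    (hD2 : 0 < Pge 2) (k : ℤ)
    (G : (ℤ → ℝ) → ℝ)
    (hG : ∀ f : ℤ → ℝ, G f =
      f k - ∑ j ∈ Finset.Icc (k - (s : ℤ)) (k - 1), (f (j + 1) - f j) ^ (m + 1) * Pge (k - j)
        + ∑ j ∈ Finset.Icc k (k + (ℓ : ℤ) - 1), (f (j + 1) - f j) ^ (m + 1) * Plt (k - j)) :
    (∀ Λ : ℝ, 0 < Λ → ∃ f : ℤ → ℝ,
      (∀ j : ℤ, 0 ≤ f (j + 1) - f j ∧ f (j + 1) - f j ≤ Λ) ∧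
      deriv (fun t => G (Function.update f (k - 1) t)) (f (k - 1)) < 0) ∧
    (∀ f : ℤ → ℝ, f k = f (k - 1) → f (k - 2) < f (k - 1) →
      deriv (fun t => G (Function.update f (k - 1) t)) (f (k - 1)) =
        ((m : ℝ) + 1) * (f k - f (k - 1)) ^ m * Pge 1
          - ((m : ℝ) + 1) * (f (k - 1) - f (k - 2)) ^ m * Pge 2 ∧
      deriv (fun t => G (Function.update f (k - 1) t)) (f (k - 1)) < 0) := by
  have hs : 2 ≤ (s : ℤ) :=
    le_of_tsum_tail_pos d 2 s (fun j hj => (hsupp j hj).2) (hPge 2 ▸ hD2)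
  have hG_update : ∀ f t, G (update f (k - 1) t) =
      (f k - ∑ j ∈ Icc (k - s) (k - 3), (f (j + 1) - f j) ^ (m + 1) * Pge (k - j)
        + ∑ j ∈ Icc k (k + ℓ - 1), (f (j + 1) - f j) ^ (m + 1) * Plt (k - j))
      - (f k - t) ^ (m + 1) * Pge 1 - (t - f (k - 2)) ^ (m + 1) * Pge 2 := fun f t => by
    rw [hG, update_of_ne (show k ≠ k - 1 by omega),
      sum_Icc_update_sub_pred (fun j x => x ^ (m + 1) * Pge (k - j)) f _ k t (by omega),
      sum_update_sub_of_forall_ne _ (fun j x => x ^ (m + 1) * Plt (k - j)) f _ t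
        fun j hj => by rw [mem_Icc] at hj; omega,
      sub_sub_cancel, sub_sub_cancel]
    ring
  have hderiv : ∀ f : ℤ → ℝ, HasDerivAt (fun t => G (update f (k - 1) t))
      ((m + 1) * (f k - f (k - 1)) ^ m * Pge 1 - (m + 1) * (f (k - 1) - f (k - 2)) ^ m * Pge 2)
      (f (k - 1)) := fun f => by
    simp only [hG_update]
    exact hasDerivAt_sub_sub_pow_mul_sub_sub_pow_mul _ _ _ _ _ _ m
  have hneg : ∀ f : ℤ → ℝ, f k = f (k - 1) → f (k - 2) < f (k - 1) →
      deriv (fun t => G (update f (k - 1) t)) (f (k - 1)) =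
        ((m : ℝ) + 1) * (f k - f (k - 1)) ^ m * Pge 1
          - ((m : ℝ) + 1) * (f (k - 1) - f (k - 2)) ^ m * Pge 2 ∧
      deriv (fun t => G (update f (k - 1) t)) (f (k - 1)) < 0 := fun f hk hk2 => by
    refine ⟨(hderiv f).deriv, ?_⟩
    have hgap : 0 < f (k - 1) - f (k - 2) := sub_pos.2 hk2
    rw [(hderiv f).deriv, hk, sub_self, zero_pow (by omega), mul_zero, zero_mul, zero_sub,
      neg_lt_zero]
    positivity
  refine ⟨fun Λ hΛ => ⟨fun j => if k - 1 ≤ j then Λ else 0, fun j => ?_, ?_⟩, hneg⟩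
  · exact ite_le_add_one_sub_ite_le_mem_Icc hΛ.le (k - 1) j
  · refine (hneg _ (by simp only [show k - 1 ≤ k by omega, le_refl, if_true]) ?_).2
    simpa only [show ¬(k - 1 ≤ k - 2) by omega, le_refl, if_true, if_false] using hΛ

theorem stmt16 (m : ℕ) (hm : 1 ≤ m) (s ℓ : ℕ)
    (d : ℤ → ℝ) (hd0 : ∀ j, 0 ≤ d j) (hdsum : HasSum d 1)
    (hsupp : ∀ j, d j ≠ 0 → -(ℓ : ℤ) ≤ j ∧ j ≤ (s : ℤ))
    (Pge : ℤ → ℝ) (hPge : ∀ n, Pge n = ∑' j : ℤ, if n ≤ j then d j else 0)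
    (Plt : ℤ → ℝ) (hPlt : ∀ n, Plt n = ∑' j : ℤ, if j < n then d j else 0)
    (hD2 : 0 < Pge 2) (k : ℤ)
    (G : (ℤ → ℝ) → ℝ)
    (hG : ∀ f : ℤ → ℝ, G f =
      f k - ∑ j ∈ Finset.Icc (k - (s : ℤ)) (k - 1), (f (j + 1) - f j) ^ (m + 1) * Pge (k - j)
        + ∑ j ∈ Finset.Icc k (k + (ℓ : ℤ) - 1), (f (j + 1) - f j) ^ (m + 1) * Plt (k - j)) :
    (∀ Λ : ℝ, 0 < Λ → ∃ f : ℤ → ℝ,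
      (∀ j : ℤ, 0 ≤ f (j + 1) - f j ∧ f (j + 1) - f j ≤ Λ) ∧
      deriv (fun t => G (Function.update f (k - 1) t)) (f (k - 1)) < 0) ∧
    (∀ f : ℤ → ℝ, f k = f (k - 1) → f (k - 2) < f (k - 1) →
      deriv (fun t => G (Function.update f (k - 1) t)) (f (k - 1)) =
        ((m : ℝ) + 1) * (f k - f (k - 1)) ^ m * Pge 1
          - ((m : ℝ) + 1) * (f (k - 1) - f (k - 2)) ^ m * Pge 2 ∧
      deriv (fun t => G (Function.update f (k - 1) t)) (f (k - 1)) < 0) :=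
  stmt16_general m hm s ℓ d hsupp Pge hPge Plt hD2 k G hG
end

section
/- For q ∈ (0,1), integer m ≥ 1, and ε ∈ (0,1), with S(ε) = (1−ε)^(m/(m+1))·(m+1)·q^(1/(m+1))·m^(−m/(m+1))·ε^(1/(m+1)), the function u^{ε,1}(x,t) (the lsc viscosity/Hopf-Lax solution with initial data ε·1{x≤0} + 1{x>0}) satisfies: u^{ε,1}(x+S(ε), 1+ε) → u(x,1) uniformly in x as ε → 0, where u(x,1) is 0 for x ≤ 0, (m/(q^(1/m)(m+1)^((m+1)/m)))·x^((m+1)/m) for 0 ≤ x ≤ (m+1)(q/m^m)^(1/(m+1)), and 1 otherwise. -/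
open Real Filter Topology Set

/-!
With `p = (m+1)/m`, the profile `U y = c · max(y,0)^p` reaches `1` exactly at the front
`x₀ = (m+1)(q/m^m)^(1/(m+1))`, and `u(·,1) = min(U, 1)`. The threshold `S(ε)(t/ε)^(1/(m+1))` is
exactly where `ε + U/t^(1/m)` reaches `1`, so `u^{ε,1}(·,t) = min(ε + U/t^(1/m), 1)`. At
`t = 1 + ε` we have `1 ≤ t^(1/m) ≤ 1/(1-ε)`, which puts `u^{ε,1}(·,1+ε)` within `ε` of
`min(U, 1)` everywhere. Finally `min(U, 1)` is `U` composed with the projection onto `[0, x₀]`,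
hence uniformly continuous, so the shift by `S(ε) → 0` costs uniformly little.
-/

lemma ite_le_eq_min {α β : Type*} [LinearOrder α] [LinearOrder β] {φ : α → β} (hφ : Monotone φ)
    {T : α} {b : β} (hT : φ T = b) (y : α) : (if y ≤ T then φ y else b) = min (φ y) b := by
  split_ifs with hy
  · exact (min_eq_left (hT ▸ hφ hy)).symm
  · exact (min_eq_right (hT ▸ hφ (not_le.mp hy).le)).symm

lemma abs_min_add_div_sub_min_le {a ε τ : ℝ} (ha : 0 ≤ a) (hτ : 1 ≤ τ) (hτε : τ * (1 - ε) ≤ 1) :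
    |min (ε + a / τ) 1 - min a 1| ≤ ε := by
  have hε : 0 ≤ ε := by nlinarith
  have hdiv_le : a / τ ≤ a := div_le_self ha hτ
  have hdiv_ge : (1 - ε) * a ≤ a / τ := by
    rw [le_div_iff₀ (by linarith)]; nlinarith
  have hmin_le : min a 1 ≤ ε + a / τ := by
    rcases le_total a 1 with h | h <;> rcases le_total ε 1 with h' | h' <;>
      nlinarith [min_le_left a 1, min_le_right a 1, div_nonneg ha (zero_le_one.trans hτ)]
  rw [abs_sub_le_iff]
  constructor
  · have := min_le_min_right 1 (show ε + a / τ ≤ ε + a by linarith)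
    have := min_le_min_left (ε + a) (le_add_of_nonneg_left hε : (1 : ℝ) ≤ ε + 1)
    rw [min_add_add_left] at this
    linarith
  · linarith [le_min hmin_le (min_le_right a 1)]

lemma UniformContinuous.tendstoUniformly_comp_add {ι E β : Type*} [SeminormedAddCommGroup E]
    [PseudoMetricSpace β] {l : Filter ι} {f : E → β} (hf : UniformContinuous f) {s : ι → E}
    (hs : Tendsto s l (𝓝 0)) : TendstoUniformly (fun i x => f (x + s i)) f l := by
  rw [Metric.tendstoUniformly_iff]
  intro δ hδ
  obtain ⟨η, hη, hfη⟩ := Metric.uniformContinuous_iff.mp hf δ hδ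
  filter_upwards [hs (Metric.ball_mem_nhds 0 hη)] with i hi x
  apply hfη
  simpa [dist_eq_norm] using hi

lemma TendstoUniformly.of_dist_le {ι α β : Type*} [PseudoMetricSpace β] {l : Filter ι}
    {F G : ι → α → β} {f : α → β} {δ : ι → ℝ} (hG : TendstoUniformly G f l)
    (hδ : Tendsto δ l (𝓝 0)) (hFG : ∀ᶠ i in l, ∀ x, dist (G i x) (F i x) ≤ δ i) :
    TendstoUniformly F f l := by
  rw [Metric.tendstoUniformly_iff] at hG ⊢
  intro r hr
  filter_upwards [hG (r / 2) (half_pos hr), hδ (Iio_mem_nhds (half_pos hr)), hFG]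
    with i hGi hδi hFGi x
  calc dist (f x) (F i x) ≤ dist (f x) (G i x) + dist (G i x) (F i x) := dist_triangle _ _ _
    _ < r := by linarith [hGi x, hFGi x, show δ i < r / 2 from hδi]

section Profile

variable (q : ℝ) (m : ℕ)

noncomputable def profile (y : ℝ) : ℝ :=
  (m : ℝ) / (q ^ ((1 : ℝ) / m) * ((m : ℝ) + 1) ^ (((m : ℝ) + 1) / m)) *
    max y 0 ^ (((m : ℝ) + 1) / m)

noncomputable def front : ℝ := ((m : ℝ) + 1) * (q / (m : ℝ) ^ m) ^ ((1 : ℝ) / (m + 1))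

variable {q m}

lemma profile_of_pos {y : ℝ} (hy : 0 < y) :
    profile q m y = (m : ℝ) / (q ^ ((1 : ℝ) / m) * ((m : ℝ) + 1) ^ (((m : ℝ) + 1) / m)) *
      y ^ (((m : ℝ) + 1) / m) := by
  rw [profile, max_eq_left hy.le]

lemma profile_of_nonpos (hm : m ≠ 0) {y : ℝ} (hy : y ≤ 0) : profile q m y = 0 := by
  rw [profile, max_eq_right hy, zero_rpow (by positivity), mul_zero]

lemma profile_max_zero (y : ℝ) : profile q m (max y 0) = profile q m y := by
  rw [profile, profile, max_eq_left (le_max_right y 0)]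

lemma profile_nonneg (hq : 0 ≤ q) (y : ℝ) : 0 ≤ profile q m y := by
  unfold profile; positivity

lemma monotone_profile (hq : 0 ≤ q) : Monotone (profile q m) := fun a b hab =>
  mul_le_mul_of_nonneg_left (rpow_le_rpow (le_max_right _ _) (max_le_max_right 0 hab)
    (by positivity)) (by positivity)

lemma continuous_profile : Continuous (profile q m) :=
  continuous_const.mul ((continuous_rpow_const (by positivity)).comp
    (continuous_id.max continuous_const))

lemma front_nonneg (hq : 0 ≤ q) : 0 ≤ front q m := by
  unfold front; positivity

lemma front_eq (hq : 0 ≤ q) (hm : m ≠ 0) :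
    front q m = ((m : ℝ) + 1) * q ^ ((1 : ℝ) / (m + 1)) * (m : ℝ) ^ (-(m : ℝ) / (m + 1)) := by
  rw [front, div_rpow hq (by positivity), ← rpow_natCast, ← rpow_mul (by positivity),
    div_eq_mul_inv _ ((m : ℝ) ^ _), ← rpow_neg (by positivity), mul_assoc]
  ring_nf

lemma profile_front_mul (hq : 0 < q) (hm : m ≠ 0) {s : ℝ} (hs : 0 ≤ s) :
    profile q m (front q m * s) = s ^ (((m : ℝ) + 1) / m) := by
  have hm' : (0 : ℝ) < m := by positivity
  have hfront : front q m ^ (((m : ℝ) + 1) / m) =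
      ((m : ℝ) + 1) ^ (((m : ℝ) + 1) / m) * q ^ ((1 : ℝ) / m) / m := by
    rw [front, mul_rpow (by positivity) (by positivity), ← rpow_mul (by positivity),
      div_rpow hq.le (by positivity), ← rpow_natCast, ← rpow_mul hm'.le]
    have h1 : (1 : ℝ) / (m + 1) * ((m + 1) / m) = 1 / m := by field_simp
    rw [h1, mul_one_div, div_self hm'.ne', rpow_one]
    ring
  rw [profile, max_eq_left (mul_nonneg (front_nonneg hq.le) hs),
    mul_rpow (front_nonneg hq.le) hs, hfront]
  field_simp

lemma profile_front (hq : 0 < q) (hm : m ≠ 0) : profile q m (front q m) = 1 := by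
  simpa using profile_front_mul hq hm zero_le_one

lemma min_profile_one_eq_projIcc (hq : 0 < q) (hm : m ≠ 0) (y : ℝ) :
    min (profile q m y) 1 = profile q m (projIcc 0 (front q m) (front_nonneg hq.le) y) := by
  rw [← profile_front hq hm, ← (monotone_profile hq.le).map_min, coe_projIcc, max_comm,
    profile_max_zero, min_comm]

lemma uniformContinuous_min_profile_one (hq : 0 < q) (hm : m ≠ 0) :
    UniformContinuous fun y => min (profile q m y) 1 := by
  simp_rw [min_profile_one_eq_projIcc hq hm]
  exact (CompactSpace.uniformContinuous_of_continuous
    (continuous_profile.comp continuous_subtype_val)).comp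
    (LipschitzWith.projIcc (front_nonneg hq.le)).uniformContinuous

lemma min_profile_one_eq_ite (hq : 0 < q) (hm : m ≠ 0) (y : ℝ) :
    min (profile q m y) 1 = if y ≤ 0 then 0 else if y ≤ front q m then
      (m : ℝ) / (q ^ ((1 : ℝ) / m) * ((m : ℝ) + 1) ^ (((m : ℝ) + 1) / m)) *
        y ^ (((m : ℝ) + 1) / m) else 1 := by
  by_cases hy0 : y ≤ 0
  · rw [if_pos hy0, profile_of_nonpos hm hy0, min_eq_left zero_le_one]
  · rw [if_neg hy0, ← profile_of_pos (not_le.mp hy0)]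
    exact (ite_le_eq_min (monotone_profile hq.le) (profile_front hq hm) y).symm

lemma min_add_profile_div_eq_ite (hq : 0 < q) (hm : m ≠ 0) {ε t : ℝ} (hε0 : 0 < ε)
    (hε1 : ε ≤ 1) (ht : 0 < t) (y : ℝ) :
    min (ε + profile q m y / t ^ ((1 : ℝ) / m)) 1 =
      if y ≤ 0 then ε
      else if y ≤ front q m * (1 - ε) ^ ((m : ℝ) / (m + 1)) * ε ^ ((1 : ℝ) / (m + 1)) *
          (t / ε) ^ ((1 : ℝ) / (m + 1)) then
        ε + ((m : ℝ) / (q ^ ((1 : ℝ) / m) * ((m : ℝ) + 1) ^ (((m : ℝ) + 1) / m))) *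
          (y ^ (m + 1) / t) ^ ((1 : ℝ) / m)
      else 1 := by
  have hm' : (0 : ℝ) < m := by positivity
  have h1ε : 0 ≤ 1 - ε := by linarith
  have hmono : Monotone fun y => ε + profile q m y / t ^ ((1 : ℝ) / m) := fun a b hab => by
    dsimp only
    gcongr
    exact monotone_profile hq.le hab
  have hthreshold : front q m * (1 - ε) ^ ((m : ℝ) / (m + 1)) * ε ^ ((1 : ℝ) / (m + 1)) *
      (t / ε) ^ ((1 : ℝ) / (m + 1)) =
      front q m * ((1 - ε) ^ ((m : ℝ) / (m + 1)) * t ^ ((1 : ℝ) / (m + 1))) := by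
    rw [div_rpow ht.le hε0.le]
    field_simp
  have hφT : ε + profile q m (front q m * ((1 - ε) ^ ((m : ℝ) / (m + 1)) *
      t ^ ((1 : ℝ) / (m + 1)))) / t ^ ((1 : ℝ) / m) = 1 := by
    rw [profile_front_mul hq hm (by positivity), mul_rpow (by positivity) (by positivity),
      ← rpow_mul h1ε, ← rpow_mul ht.le,
      show (m : ℝ) / (m + 1) * ((m + 1) / m) = 1 by field_simp,
      show (1 : ℝ) / (m + 1) * ((m + 1) / m) = 1 / m by field_simp, rpow_one]
    field_simp
    ring
  by_cases hy0 : y ≤ 0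
  · rw [if_pos hy0, profile_of_nonpos hm hy0, zero_div, add_zero, min_eq_left hε1]
  · have hy : 0 < y := not_le.mp hy0
    have hbranch : ((m : ℝ) / (q ^ ((1 : ℝ) / m) * ((m : ℝ) + 1) ^ (((m : ℝ) + 1) / m))) *
        (y ^ (m + 1) / t) ^ ((1 : ℝ) / m) = profile q m y / t ^ ((1 : ℝ) / m) := by
      rw [profile_of_pos hy, div_rpow (by positivity) ht.le, ← rpow_natCast_mul hy.le]
      push_cast
      ring_nf
    rw [if_neg hy0, hthreshold, hbranch]
    exact (ite_le_eq_min hmono hφT y).symm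

end Profile

theorem stmt17_general (q : ℝ) (hq0 : 0 < q) (m : ℕ) (hm : 1 ≤ m)
    (S : ℝ → ℝ)
    (hS : ∀ ε : ℝ, S ε = (1 - ε) ^ ((m : ℝ) / (m + 1)) * ((m : ℝ) + 1) * q ^ ((1 : ℝ) / (m + 1)) *
      (m : ℝ) ^ (-(m : ℝ) / (m + 1)) * ε ^ ((1 : ℝ) / (m + 1)))
    (uε : ℝ → ℝ → ℝ → ℝ)
    (huε : ∀ ε x t, uε ε x t = if x ≤ 0 then ε
      else if x ≤ S ε * (t / ε) ^ ((1 : ℝ) / (m + 1)) then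
        ε + ((m : ℝ) / (q ^ ((1 : ℝ) / m) * ((m : ℝ) + 1) ^ (((m : ℝ) + 1) / m))) *
          (x ^ (m + 1) / t) ^ ((1 : ℝ) / m)
      else 1)
    (u1 : ℝ → ℝ)
    (hu1 : ∀ x, u1 x = if x ≤ 0 then 0
      else if x ≤ ((m : ℝ) + 1) * (q / (m : ℝ) ^ m) ^ ((1 : ℝ) / (m + 1)) then
        ((m : ℝ) / (q ^ ((1 : ℝ) / m) * ((m : ℝ) + 1) ^ (((m : ℝ) + 1) / m))) * x ^ (((m : ℝ) + 1) / m)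
      else 1) :
    TendstoUniformly (fun ε x => uε ε (x + S ε) (1 + ε)) u1 (nhdsWithin 0 (Set.Ioo 0 1)) := by
  have hm0 : m ≠ 0 := by omega
  obtain rfl : u1 = fun x => min (profile q m x) 1 :=
    funext fun x => (hu1 x).trans (min_profile_one_eq_ite hq0 hm0 x).symm
  have hS_eq (ε : ℝ) :
      S ε = front q m * (1 - ε) ^ ((m : ℝ) / (m + 1)) * ε ^ ((1 : ℝ) / (m + 1)) := by
    rw [hS, front_eq hq0.le hm0]; ring
  have hS0 : Tendsto S (𝓝 0) (𝓝 0) := by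
    have hcont : ContinuousAt S 0 := by
      simp only [funext hS_eq]
      fun_prop (disch := positivity)
    have hS00 : S 0 = 0 := by
      rw [hS_eq, zero_rpow (by positivity), mul_zero]
    simpa only [hS00] using hcont.tendsto
  refine ((uniformContinuous_min_profile_one hq0 hm0).tendstoUniformly_comp_add
    (hS0.mono_left nhdsWithin_le_nhds)).of_dist_le
    (tendsto_id.mono_left nhdsWithin_le_nhds) ?_
  filter_upwards [self_mem_nhdsWithin] with ε ⟨hε0, hε1⟩ x
  have hτ : (1 + ε) ^ ((1 : ℝ) / m) ≤ 1 + ε := rpow_le_self_of_one_le (by linarith)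
    (div_le_one_of_le₀ (by exact_mod_cast hm) (by positivity))
  rw [huε, hS_eq, ← min_add_profile_div_eq_ite hq0 hm0 hε0 hε1.le (by linarith),
    dist_comm, Real.dist_eq]
  exact abs_min_add_div_sub_min_le (profile_nonneg hq0.le _)
    (one_le_rpow (by linarith) (by positivity)) (by nlinarith)

theorem stmt17 (q : ℝ) (hq0 : 0 < q) (hq1 : q < 1) (m : ℕ) (hm : 1 ≤ m)
    (S : ℝ → ℝ)
    (hS : ∀ ε : ℝ, S ε = (1 - ε) ^ ((m : ℝ) / (m + 1)) * ((m : ℝ) + 1) * q ^ ((1 : ℝ) / (m + 1)) *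
      (m : ℝ) ^ (-(m : ℝ) / (m + 1)) * ε ^ ((1 : ℝ) / (m + 1)))
    (uε : ℝ → ℝ → ℝ → ℝ)
    (huε : ∀ ε x t, uε ε x t = if x ≤ 0 then ε
      else if x ≤ S ε * (t / ε) ^ ((1 : ℝ) / (m + 1)) then
        ε + ((m : ℝ) / (q ^ ((1 : ℝ) / m) * ((m : ℝ) + 1) ^ (((m : ℝ) + 1) / m))) *
          (x ^ (m + 1) / t) ^ ((1 : ℝ) / m)
      else 1)
    (u1 : ℝ → ℝ)
    (hu1 : ∀ x, u1 x = if x ≤ 0 then 0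
      else if x ≤ ((m : ℝ) + 1) * (q / (m : ℝ) ^ m) ^ ((1 : ℝ) / (m + 1)) then
        ((m : ℝ) / (q ^ ((1 : ℝ) / m) * ((m : ℝ) + 1) ^ (((m : ℝ) + 1) / m))) * x ^ (((m : ℝ) + 1) / m)
      else 1) :
    TendstoUniformly (fun ε x => uε ε (x + S ε) (1 + ε)) u1 (nhdsWithin 0 (Set.Ioo 0 1)) :=
  stmt17_general q hq0 m hm S hS uε huε u1 hu1
end
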